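/- Assume additionally that Q, Q' ∈ Q_F⁺(N, d_K), i.e., their leading coefficients are totally positive. Then [Q] = [Q'] in C_F(N, d_K) if and only if −conj(ω_Q) = γ(−conj(ω_{Q'})) for some γ ∈ Γ_{F,1}⁺(N), the subgroup of Γ_{F,1}(N) of matrices with totally positive determinant. -/

import Mathlib

open NumberField Complex

noncomputable section

def iota (F K : Type) [Field F] [Field K] [NumberField F] [Algebra F K]
    (u : 𝓞 F) : K := algebraMap F K (u : F)

def IsGammaN (F : Type) [Field F] [NumberField F] (τ : F →+* ℝ) (N : ℕ)
    (γ : Matrix (Fin 2) (Fin 2) (𝓞 F)) : Prop :=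
  IsUnit γ.det ∧ 0 < τ (γ.det : F) ∧
    (N : 𝓞 F) ∣ γ 1 0 ∧ ∃ ζ : (𝓞 F)ˣ, (N : 𝓞 F) ∣ (γ 1 1 - (ζ : 𝓞 F))

def FormAct (F : Type) [Field F] [NumberField F]
    (γ : Matrix (Fin 2) (Fin 2) (𝓞 F)) (a b c a' b' c' : 𝓞 F) : Prop :=
  γ.det * a' = a * γ 0 0 ^ 2 + b * γ 0 0 * γ 1 0 + c * γ 1 0 ^ 2 ∧
  γ.det * b' = 2 * a * γ 0 0 * γ 0 1 + b * (γ 0 0 * γ 1 1 + γ 0 1 * γ 1 0)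
      + 2 * c * γ 1 0 * γ 1 1 ∧
  γ.det * c' = a * γ 0 1 ^ 2 + b * γ 0 1 * γ 1 1 + c * γ 1 1 ^ 2

def IsFormN (F : Type) [Field F] [NumberField F] (τ : F →+* ℝ) (N : ℕ)
    (dK : 𝓞 F) (a b c : 𝓞 F) : Prop :=
  (∀ d : 𝓞 F, d ∣ a → d ∣ b → d ∣ c → IsUnit d) ∧
  0 < τ (a : F) ∧
  b ^ 2 - 4 * a * c = dK ∧
  (∀ d : 𝓞 F, d ∣ a → d ∣ (N : 𝓞 F) → IsUnit d)

/-- `ω` is the root of `Q(x,1)` lying in the upper half-plane (via the fixed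
embedding `σ : K → ℂ`). -/
def IsFormRoot (F K : Type) [Field F] [Field K] [NumberField F] [Algebra F K]
    (σ : K →+* ℂ) (a b c : 𝓞 F) (ω : K) : Prop :=
  iota F K a * ω ^ 2 + iota F K b * ω + iota F K c = 0 ∧ 0 < (σ ω).im

/-- Total positivity of an element of `O_F` (at all real embeddings of the
totally real field `F`). -/
def TotPos (F : Type) [Field F] [NumberField F] (x : 𝓞 F) : Prop :=
  ∀ τ' : F →+* ℝ, 0 < τ' (x : F)

/-!
The discriminant `d_K` is totally negative: every real embedding of `F` extends to an embedding
of `K`, and by the CM-type condition no embedding of `K` sends `ω_K` to a real number. So every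
form of discriminant `d_K` with totally positive leading coefficient is positive definite at
every real place.

If `det γ • Q' = Q ∘ γ` with `τ (det γ) > 0`, then `γ ω'` is a root of `Q` in the upper
half-plane, hence equals `ω`; and `det γ · a' = Q(γ₀₀, γ₁₀)` is totally positive, so `det γ` is.
Conversely, if `ω = γ ω'` then `Q ∘ γ` vanishes at the non-real `ω'`, so it is proportional to
`Q'` over `F`; comparing discriminants fixes the factor up to sign, and the sign of the leading
coefficients at `τ` shows it is `det γ`.
Finally `z ↦ -conj z` intertwines the action of `γ` with that of the matrix obtained by negating
its anti-diagonal.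
-/

namespace Complex

theorem discrim_neg_of_im_ne_zero {a b c : ℝ} {z : ℂ} (ha : a ≠ 0) (hz : z.im ≠ 0)
    (h : (a : ℂ) * z ^ 2 + b * z + c = 0) : discrim a b c < 0 := by
  have hre := congrArg re h
  have him := congrArg im h
  simp only [pow_two, add_re, add_im, mul_re, mul_im, ofReal_re, ofReal_im, zero_re, zero_im]
    at hre him
  have hb : b = -2 * a * z.re := mul_right_cancel₀ hz (by linear_combination him)
  have hdiscrim : discrim a b c = -(2 * a * z.im) ^ 2 := by
    rw [discrim]; subst hb; linear_combination -4 * a * hre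
  rw [hdiscrim, neg_neg_iff_pos]
  exact sq_pos_of_ne_zero (by positivity)

theorem im_ofReal_linear_div (p q r s : ℝ) (z : ℂ) :
    ((p * z + q) / (r * z + s)).im = (p * s - q * r) * z.im / normSq (r * z + s) := by
  simp only [div_im, add_im, mul_im, ofReal_re, ofReal_im, zero_mul, add_zero, add_re, mul_re,
    sub_zero, ← sub_div]
  ring

end Complex

theorem quadratic_form_pos_of_discrim_neg {a b c x y : ℝ} (hd : discrim a b c < 0) (ha : 0 < a)
    (hxy : x ≠ 0 ∨ y ≠ 0) : 0 < a * x ^ 2 + b * x * y + c * y ^ 2 := by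
  rw [discrim] at hd
  rcases eq_or_ne y 0 with rfl | hy
  · have hx : x ≠ 0 := by simpa using hxy
    simpa using mul_pos ha (sq_pos_of_ne_zero hx)
  · nlinarith [sq_nonneg (2 * a * x + b * y), mul_pos (neg_pos.2 hd) (sq_pos_of_ne_zero hy)]

theorem quadratic_div_eq {L : Type*} [Field L] (a b c G : L) {D : L} (hD : D ≠ 0) :
    a * (G / D) ^ 2 + b * (G / D) + c = (a * G ^ 2 + b * G * D + c * D ^ 2) / D ^ 2 := by
  field_simp

theorem exists_ringHom_extend_realEmbedding (F K : Type) [Field F] [Field K] [NumberField F]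
    [NumberField K] [Algebra F K] (τ : F →+* ℝ) : ∃ ψ : K →+* ℂ, ∀ x : F, ψ (algebraMap F K x) = τ x := by
  let _ : Algebra F ℂ := (ofRealHom.comp τ).toAlgebra
  exact ⟨(IsAlgClosed.lift : K →ₐ[F] ℂ), (IsAlgClosed.lift : K →ₐ[F] ℂ).commutes⟩

@[simp]
theorem AlgEquiv.apply_algebraMap_ringOfIntegers {F K : Type} [Field F] [Field K] [Algebra F K]
    (e : K ≃ₐ[F] K) (u : 𝓞 F) : e (algebraMap (𝓞 F) K u) = algebraMap (𝓞 F) K u :=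
  e.commutes (u : F)

section Forms

variable {F K : Type} [Field F] [Field K] [NumberField F] [Algebra F K]

theorem iota_eq_algebraMap (u : 𝓞 F) : iota F K u = algebraMap (𝓞 F) K u := rfl

theorem apply_iota {τ : F →+* ℝ} {σ : K →+* ℂ} (hστ : ∀ x : F, σ (algebraMap F K x) = τ x)
    (u : 𝓞 F) : σ (iota F K u) = τ u :=
  hστ u

theorem eq_zero_of_iota_mul_add_eq_zero {τ : F →+* ℝ} {σ : K →+* ℂ}
    (hστ : ∀ x : F, σ (algebraMap F K x) = τ x) {u v : 𝓞 F} {z : K} (hz : (σ z).im ≠ 0)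
    (h : iota F K u * z + iota F K v = 0) : u = 0 ∧ v = 0 := by
  have him := congrArg (fun x => (σ x).im) h
  simp only [map_add, map_mul, apply_iota hστ, add_im, mul_im, ofReal_re, ofReal_im, zero_mul,
    add_zero, map_zero, zero_im] at him
  have hu : u = 0 := by simpa [hz] using him
  subst hu
  exact ⟨rfl, by simpa [iota_eq_algebraMap] using h⟩

theorem discrim_neg_of_isRoot {τ : F →+* ℝ} {σ : K →+* ℂ}
    (hστ : ∀ x : F, σ (algebraMap F K x) = τ x) {a b c : 𝓞 F} {z : K} (ha : a ≠ 0)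
    (hz : (σ z).im ≠ 0) (h : iota F K a * z ^ 2 + iota F K b * z + iota F K c = 0) :
    τ (discrim a b c : 𝓞 F) < 0 := by
  have hσ := congrArg σ h
  simp only [map_add, map_mul, map_pow, apply_iota hστ, map_zero] at hσ
  have hτa : τ a ≠ 0 := by simpa using ha
  simpa [discrim, map_ofNat] using Complex.discrim_neg_of_im_ne_zero hτa hz hσ

theorem map_quadratic_form_pos_of_discrim_neg (τ : F →+* ℝ) {a b c x y : 𝓞 F}
    (hd : τ (discrim a b c : 𝓞 F) < 0) (ha : 0 < τ a) (hxy : x ≠ 0 ∨ y ≠ 0) :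
    0 < τ (a * x ^ 2 + b * x * y + c * y ^ 2 : 𝓞 F) := by
  have hxy' : τ x ≠ 0 ∨ τ y ≠ 0 := by simpa using hxy
  have hd' : discrim (τ a) (τ b) (τ c) < 0 := by simpa [discrim, map_ofNat] using hd
  simpa using quadratic_form_pos_of_discrim_neg hd' ha hxy'

theorem eq_of_isFormRoot {τ : F →+* ℝ} {σ : K →+* ℂ}
    (hστ : ∀ x : F, σ (algebraMap F K x) = τ x) {a b c : 𝓞 F} {z ω : K} (ha : a ≠ 0)
    (hz : IsFormRoot F K σ a b c z) (hω : IsFormRoot F K σ a b c ω) : z = ω := by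
  by_contra hne
  have hsum : iota F K a * (z + ω) + iota F K b = 0 := by
    have : (z - ω) * (iota F K a * (z + ω) + iota F K b) = 0 := by
      linear_combination hz.1 - hω.1
    exact (mul_eq_zero.1 this).resolve_left (sub_ne_zero.2 hne)
  have him : (σ (z + ω)).im ≠ 0 := by
    rw [map_add, add_im]
    exact (add_pos hz.2 hω.2).ne'
  exact ha (eq_zero_of_iota_mul_add_eq_zero hστ him hsum).1

theorem eq_smul_of_isRoot_of_discrim_eq {τ : F →+* ℝ} {σ : K →+* ℂ}
    (hστ : ∀ x : F, σ (algebraMap F K x) = τ x) {A B C a b c e : 𝓞 F} {z : K}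
    (hz : (σ z).im ≠ 0) (hABC : iota F K A * z ^ 2 + iota F K B * z + iota F K C = 0)
    (habc : iota F K a * z ^ 2 + iota F K b * z + iota F K c = 0)
    (hdisc : discrim A B C = e ^ 2 * discrim a b c)
    (hA : 0 < τ A) (ha : 0 < τ a) (he : 0 < τ e) :
    A = e * a ∧ B = e * b ∧ C = e * c := by
  have ha0 : a ≠ 0 := by rintro rfl; simp at ha
  obtain ⟨hB, hC⟩ : A * b = a * B ∧ A * c = a * C := by
    have h : iota F K (A * b - a * B) * z + iota F K (A * c - a * C) = 0 := by
      simp only [iota_eq_algebraMap, map_sub, map_mul] at hABC habc ⊢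
      linear_combination algebraMap (𝓞 F) K A * habc - algebraMap (𝓞 F) K a * hABC
    obtain ⟨h1, h2⟩ := eq_zero_of_iota_mul_add_eq_zero hστ hz h
    exact ⟨sub_eq_zero.1 h1, sub_eq_zero.1 h2⟩
  have hd0 : discrim a b c ≠ 0 := fun h0 => by
    have := discrim_neg_of_isRoot hστ ha0 hz habc
    rw [h0] at this
    simp at this
  have hsq : A ^ 2 = (e * a) ^ 2 := by
    have : (A ^ 2 - (e * a) ^ 2) * discrim a b c = 0 := by
      unfold discrim at hdisc ⊢
      linear_combination a ^ 2 * hdisc + (A * b + a * B) * hB - 4 * a * A * hC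
    exact sub_eq_zero.1 ((mul_eq_zero.1 this).resolve_right hd0)
  have hAe : A = e * a := by
    refine (sq_eq_sq_iff_eq_or_eq_neg.1 hsq).resolve_right fun h => ?_
    have : τ A = -(τ e * τ a) := by simp [h]
    nlinarith [mul_pos he ha]
  refine ⟨hAe, mul_left_cancel₀ ha0 ?_, mul_left_cancel₀ ha0 ?_⟩
  · linear_combination -hB + b * hAe
  · linear_combination -hC + c * hAe

end Forms

namespace Matrix

variable {R : Type*} [CommRing R]

def negAntidiag (γ : Matrix (Fin 2) (Fin 2) R) : Matrix (Fin 2) (Fin 2) R :=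
  !![γ 0 0, -γ 0 1; -γ 1 0, γ 1 1]

@[simp]
theorem det_negAntidiag (γ : Matrix (Fin 2) (Fin 2) R) : γ.negAntidiag.det = γ.det := by
  simp [negAntidiag, det_fin_two]

@[simp]
theorem negAntidiag_negAntidiag (γ : Matrix (Fin 2) (Fin 2) R) :
    γ.negAntidiag.negAntidiag = γ := by
  ext i j; fin_cases i <;> fin_cases j <;> simp [negAntidiag]

theorem fst_col_ne_zero_of_det_ne_zero [NoZeroDivisors R] {γ : Matrix (Fin 2) (Fin 2) R}
    (h : γ.det ≠ 0) : γ 0 0 ≠ 0 ∨ γ 1 0 ≠ 0 := by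
  contrapose! h
  simp [det_fin_two, h.1, h.2]

end Matrix

open Matrix

section Mobius

variable {F K : Type} [Field F] [Field K] [NumberField F] [Algebra F K]

theorem isGammaN_negAntidiag_iff (τ : F →+* ℝ) (N : ℕ) (γ : Matrix (Fin 2) (Fin 2) (𝓞 F)) :
    IsGammaN F τ N γ.negAntidiag ↔ IsGammaN F τ N γ := by
  rw [IsGammaN, IsGammaN, det_negAntidiag]
  simp [negAntidiag]

def IsMobiusImage (γ : Matrix (Fin 2) (Fin 2) (𝓞 F)) (w z : K) : Prop :=
  iota F K (γ 1 0) * w + iota F K (γ 1 1) ≠ 0 ∧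
    z = (iota F K (γ 0 0) * w + iota F K (γ 0 1)) / (iota F K (γ 1 0) * w + iota F K (γ 1 1))

theorem isMobiusImage_negAntidiag_neg_iff (e : K ≃ₐ[F] K) (γ : Matrix (Fin 2) (Fin 2) (𝓞 F))
    (w z : K) : IsMobiusImage γ.negAntidiag (-e w) (-e z) ↔ IsMobiusImage γ w z := by
  have hden : iota F K (-γ 1 0) * -e w + iota F K (γ 1 1) =
      e (iota F K (γ 1 0) * w + iota F K (γ 1 1)) := by
    simp [iota_eq_algebraMap]
  have hnum : iota F K (γ 0 0) * -e w + iota F K (-γ 0 1) =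
      -e (iota F K (γ 0 0) * w + iota F K (γ 0 1)) := by
    simp only [iota_eq_algebraMap, mul_neg, map_neg, map_add, map_mul,
      AlgEquiv.apply_algebraMap_ringOfIntegers]
    ring
  rw [IsMobiusImage, IsMobiusImage]
  simp only [negAntidiag, of_apply, cons_val', cons_val_zero, cons_val_one, empty_val',
    cons_val_fin_one, hden, hnum]
  rw [neg_div, neg_inj, ← map_div₀, e.injective.eq_iff, map_ne_zero]

theorem quadratic_mobius_eq_div (γ : Matrix (Fin 2) (Fin 2) (𝓞 F)) (a b c : 𝓞 F) {w : K}
    (hD : iota F K (γ 1 0) * w + iota F K (γ 1 1) ≠ 0) :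
    iota F K a * ((iota F K (γ 0 0) * w + iota F K (γ 0 1)) /
        (iota F K (γ 1 0) * w + iota F K (γ 1 1))) ^ 2 +
      iota F K b * ((iota F K (γ 0 0) * w + iota F K (γ 0 1)) /
        (iota F K (γ 1 0) * w + iota F K (γ 1 1))) + iota F K c =
      (iota F K (a * γ 0 0 ^ 2 + b * γ 0 0 * γ 1 0 + c * γ 1 0 ^ 2) * w ^ 2 +
        iota F K (2 * a * γ 0 0 * γ 0 1 + b * (γ 0 0 * γ 1 1 + γ 0 1 * γ 1 0)
          + 2 * c * γ 1 0 * γ 1 1) * w +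
        iota F K (a * γ 0 1 ^ 2 + b * γ 0 1 * γ 1 1 + c * γ 1 1 ^ 2)) /
      (iota F K (γ 1 0) * w + iota F K (γ 1 1)) ^ 2 := by
  rw [quadratic_div_eq _ _ _ _ hD]
  congr 1
  simp only [iota_eq_algebraMap, map_add, map_mul, map_pow, map_ofNat]
  ring

end Mobius

section FormAction

variable {F K : Type} [Field F] [Field K] [NumberField F] [Algebra F K]

theorem isMobiusImage_of_formAct {τ : F →+* ℝ} {σ : K →+* ℂ}
    (hστ : ∀ x : F, σ (algebraMap F K x) = τ x) {γ : Matrix (Fin 2) (Fin 2) (𝓞 F)}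
    {a b c a' b' c' : 𝓞 F} {ω ω' : K} (ha : a ≠ 0) (hdet : 0 < τ γ.det)
    (hact : FormAct F γ a b c a' b' c') (hω : IsFormRoot F K σ a b c ω)
    (hω' : IsFormRoot F K σ a' b' c' ω') : IsMobiusImage γ ω' ω := by
  have hD : iota F K (γ 1 0) * ω' + iota F K (γ 1 1) ≠ 0 := fun hD => by
    obtain ⟨hr, hs⟩ := eq_zero_of_iota_mul_add_eq_zero hστ hω'.2.ne' hD
    simp [det_fin_two, hr, hs] at hdet
  refine ⟨hD, (eq_of_isFormRoot hστ ha ⟨?_, ?_⟩ hω).symm⟩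
  · obtain ⟨h1, h2, h3⟩ := hact
    rw [quadratic_mobius_eq_div γ a b c hD, ← h1, ← h2, ← h3, div_eq_zero_iff]
    left
    have hQ' := hω'.1
    simp only [iota_eq_algebraMap, map_mul] at hQ' ⊢
    linear_combination algebraMap (𝓞 F) K γ.det * hQ'
  · have hσD := (map_ne_zero σ).2 hD
    simp only [map_div₀, map_add, map_mul, apply_iota hστ] at hσD ⊢
    rw [Complex.im_ofReal_linear_div]
    refine div_pos (mul_pos ?_ hω'.2) (normSq_pos.2 hσD)
    simpa [det_fin_two] using hdet

theorem formAct_of_isMobiusImage {τ : F →+* ℝ} {σ : K →+* ℂ}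
    (hστ : ∀ x : F, σ (algebraMap F K x) = τ x) {γ : Matrix (Fin 2) (Fin 2) (𝓞 F)}
    {a b c a' b' c' : 𝓞 F} {ω ω' : K} (ha : 0 < τ a) (ha' : 0 < τ a') (hdet : 0 < τ γ.det)
    (hdisc : discrim a b c = discrim a' b' c') (hω : IsFormRoot F K σ a b c ω)
    (hω' : IsFormRoot F K σ a' b' c' ω') (hmob : IsMobiusImage γ ω' ω) :
    FormAct F γ a b c a' b' c' := by
  have ha0 : a ≠ 0 := by rintro rfl; simp at ha
  have hdet0 : γ.det ≠ 0 := by rintro h; simp [h] at hdet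
  have hroot := hω.1
  obtain ⟨hD, rfl⟩ := hmob
  rw [quadratic_mobius_eq_div γ a b c hD, div_eq_zero_iff] at hroot
  have hA := map_quadratic_form_pos_of_discrim_neg τ
    (discrim_neg_of_isRoot hστ ha0 hω.2.ne' hω.1) ha (fst_col_ne_zero_of_det_ne_zero hdet0)
  obtain ⟨h1, h2, h3⟩ := eq_smul_of_isRoot_of_discrim_eq hστ hω'.2.ne'
    (hroot.resolve_right (pow_ne_zero 2 hD)) hω'.1
    (by rw [← hdisc, det_fin_two]; unfold discrim; ring) hA ha' hdet
  exact ⟨h1.symm, h2.symm, h3.symm⟩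

theorem totPos_det_of_formAct {γ : Matrix (Fin 2) (Fin 2) (𝓞 F)} {a b c a' b' c' : 𝓞 F}
    (hdisc : ∀ τ : F →+* ℝ, τ (discrim a b c : 𝓞 F) < 0) (ha : TotPos F a) (ha' : TotPos F a')
    (hdet : γ.det ≠ 0) (hact : FormAct F γ a b c a' b' c') : TotPos F γ.det := fun τ => by
  have hpos := map_quadratic_form_pos_of_discrim_neg τ (hdisc τ) (ha τ)
    (fst_col_ne_zero_of_det_ne_zero hdet)
  rw [← hact.1] at hpos
  push_cast at hpos
  rw [map_mul] at hpos
  exact pos_of_mul_pos_left hpos (ha' τ).le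

theorem discrim_neg_of_isRoot_of_forall_im_ne_zero [NumberField K] {a b c : 𝓞 F} {z : K}
    (ha : a ≠ 0) (hz : ∀ ψ : K →+* ℂ, (ψ z).im ≠ 0)
    (h : iota F K a * z ^ 2 + iota F K b * z + iota F K c = 0) (τ : F →+* ℝ) :
    τ (discrim a b c : 𝓞 F) < 0 := by
  obtain ⟨ψ, hψ⟩ := exists_ringHom_extend_realEmbedding F K τ
  exact discrim_neg_of_isRoot hψ ha (hz ψ) h

end FormAction

theorem stmt13_general (F K : Type) [Field F] [Field K] [NumberField F] [NumberField K]
    [Algebra F K] (τ : F →+* ℝ) (σ : K →+* ℂ)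
    (hcompat : ∀ x : F, σ (algebraMap F K x) = (τ x : ℂ))
    (ωK : K)
    (bK cK : 𝓞 F) (hmin : ωK ^ 2 + iota F K bK * ωK + iota F K cK = 0)
    (dK : 𝓞 F) (hdK : dK = bK ^ 2 - 4 * cK)
    -- the fixed CM-type (K, {φ_i}) with φ₁ = id_K (the fixed embedding σ)
    -- and φ_i(ω_K) ∈ ℍ for all i
    (g : ℕ) (φs : Fin g → (K →+* ℂ))
    (hcover : ∀ ψ : K →+* ℂ, ∃ i, ψ = φs i ∨ ψ = (starRingEnd ℂ).comp (φs i))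
    (hωKtype : ∀ i, 0 < (φs i ωK).im)
    -- conj : complex conjugation on K
    (conj : K ≃ₐ[F] K)
    (N : ℕ)
    (a b c : 𝓞 F) (hQ : IsFormN F τ N dK a b c) (haPos : TotPos F a)
    (a' b' c' : 𝓞 F) (hQ' : IsFormN F τ N dK a' b' c') (haPos' : TotPos F a')
    (ω : K) (hω : IsFormRoot F K σ a b c ω)
    (ω' : K) (hω' : IsFormRoot F K σ a' b' c' ω') :
    (∃ γ : Matrix (Fin 2) (Fin 2) (𝓞 F),
        IsGammaN F τ N γ ∧ FormAct F γ a b c a' b' c')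
    ↔ (∃ γ : Matrix (Fin 2) (Fin 2) (𝓞 F), IsGammaN F τ N γ ∧
        TotPos F γ.det ∧
        iota F K (γ 1 0) * (-(conj ω')) + iota F K (γ 1 1) ≠ 0 ∧
        -(conj ω) = (iota F K (γ 0 0) * (-(conj ω')) + iota F K (γ 0 1)) /
          (iota F K (γ 1 0) * (-(conj ω')) + iota F K (γ 1 1))) := by
  have hωK : ∀ ψ : K →+* ℂ, (ψ ωK).im ≠ 0 := fun ψ => by
    obtain ⟨i, rfl | rfl⟩ := hcover ψ
    · exact (hωKtype i).ne'
    · simpa using (hωKtype i).ne'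
  have hdisc_neg : ∀ τ' : F →+* ℝ, τ' (discrim a b c : 𝓞 F) < 0 := by
    have hdisc : discrim a b c = dK := hQ.2.2.1
    rw [hdisc, hdK, show bK ^ 2 - 4 * cK = discrim 1 bK cK by rw [discrim]; ring]
    exact discrim_neg_of_isRoot_of_forall_im_ne_zero one_ne_zero hωK
      (by simpa [iota_eq_algebraMap] using hmin)
  constructor
  · rintro ⟨γ, hγ, hact⟩
    have ha0 : a ≠ 0 := by rintro rfl; simpa using haPos τ
    have hdet : γ.det ≠ 0 := by intro h; simpa [h] using hγ.2.1
    refine ⟨γ.negAntidiag, (isGammaN_negAntidiag_iff τ N γ).2 hγ, ?_, ?_⟩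
    · rw [det_negAntidiag]
      exact totPos_det_of_formAct hdisc_neg haPos haPos' hdet hact
    · exact (isMobiusImage_negAntidiag_neg_iff conj γ ω' ω).2
        (isMobiusImage_of_formAct hcompat ha0 hγ.2.1 hact hω hω')
  · rintro ⟨δ, hδ, -, hmob⟩
    have hmob' : IsMobiusImage δ.negAntidiag ω' ω :=
      (isMobiusImage_negAntidiag_neg_iff conj _ ω' ω).1 (by rwa [negAntidiag_negAntidiag])
    refine ⟨δ.negAntidiag, (isGammaN_negAntidiag_iff τ N δ).2 hδ, ?_⟩
    exact formAct_of_isMobiusImage hcompat (haPos τ) (haPos' τ) (by simpa using hδ.2.1)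
      (hQ.2.2.1.trans hQ'.2.2.1.symm) hω hω' hmob'

theorem stmt13 (F K : Type) [Field F] [Field K] [NumberField F] [NumberField K]
    [Algebra F K] (τ : F →+* ℝ) (σ : K →+* ℂ)
    (hcompat : ∀ x : F, σ (algebraMap F K x) = (τ x : ℂ))
    (hF_totallyReal : ∀ φ : F →+* ℂ, ∀ x : F, (φ x).im = 0)
    (hquadratic : Module.finrank F K = 2)
    (hclass : NumberField.classNumber F = 1)
    (ωK : K) (hωKint : IsIntegral ℤ ωK) (hωKim : 0 < (σ ωK).im)
    (hgen : ∀ x : 𝓞 K, ∃ u v : 𝓞 F, (x : K) = iota F K u * ωK + iota F K v)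
    (bK cK : 𝓞 F) (hmin : ωK ^ 2 + iota F K bK * ωK + iota F K cK = 0)
    (dK : 𝓞 F) (hdK : dK = bK ^ 2 - 4 * cK)
    -- the fixed CM-type (K, {φ_i}) with φ₁ = id_K (the fixed embedding σ)
    -- and φ_i(ω_K) ∈ ℍ for all i
    (g : ℕ) (hg : 0 < g) (φs : Fin g → (K →+* ℂ))
    (hcover : ∀ ψ : K →+* ℂ, ∃ i, ψ = φs i ∨ ψ = (starRingEnd ℂ).comp (φs i))
    (hdist : ∀ i j, φs i ≠ (starRingEnd ℂ).comp (φs j))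
    (hφ0 : φs ⟨0, hg⟩ = σ)
    (hωKtype : ∀ i, 0 < (φs i ωK).im)
    -- conj : complex conjugation on K
    (conj : K ≃ₐ[F] K)
    (hσconj : ∀ x : K, σ (conj x) = starRingEnd ℂ (σ x))
    (N : ℕ) (hN : 0 < N)
    (a b c : 𝓞 F) (hQ : IsFormN F τ N dK a b c) (haPos : TotPos F a)
    (a' b' c' : 𝓞 F) (hQ' : IsFormN F τ N dK a' b' c') (haPos' : TotPos F a')
    (ω : K) (hω : IsFormRoot F K σ a b c ω)
    (ω' : K) (hω' : IsFormRoot F K σ a' b' c' ω') :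
    (∃ γ : Matrix (Fin 2) (Fin 2) (𝓞 F),
        IsGammaN F τ N γ ∧ FormAct F γ a b c a' b' c')
    ↔ (∃ γ : Matrix (Fin 2) (Fin 2) (𝓞 F), IsGammaN F τ N γ ∧
        TotPos F γ.det ∧
        iota F K (γ 1 0) * (-(conj ω')) + iota F K (γ 1 1) ≠ 0 ∧
        -(conj ω) = (iota F K (γ 0 0) * (-(conj ω')) + iota F K (γ 0 1)) /
          (iota F K (γ 1 0) * (-(conj ω')) + iota F K (γ 1 1))) :=
  stmt13_general F K τ σ hcompat ωK bK cK hmin dK hdK g φs hcover hωKtype conj N a b c hQ haPos a'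
    b' c' hQ' haPos' ω hω ω' hω'
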